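/- arXiv:math/0203176 — 2 statements merged into one kernel-verified Lean document; each statement's English description precedes it below -/
import Mathlib

section
/- The Vandermonde function h(x) = ∏_{i<j} (x_j - x_i) is harmonic on ℝ^n, i.e., its Laplacian vanishes identically. -/
/-!
Write `h(x) = det V` with `V = (x_i ^ j)`. The variable `x_k` only enters row `k` of `V`, so
`∂²h/∂x_k²` is `det V` with row `k` replaced by `(j (j - 1) x_k ^ (j - 2))_j`, which is row `k` of
`V * N` for the matrix `N` of `d²/dt²` on the monomials `1, t, …, t ^ (n - 1)`. Expanding along
row `k` with the adjugate, `∑_k det (V with row k replaced by (V * N)_k) = trace (V * N * adj V)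
= det V * trace N`, and `trace N = 0` because `d²/dt²` lowers degrees.
-/

open Finset

/-- The Vandermonde function `h(x) = ∏_{i<j} (x_j - x_i)` on `ℝ^n`. -/
noncomputable def vandermondeFn (n : ℕ) (x : Fin n → ℝ) : ℝ :=
  ∏ p ∈ Finset.univ.filter (fun p : Fin n × Fin n => p.1 < p.2), (x p.2 - x p.1)

namespace Matrix

section Determinant

variable {n R : Type*} [Fintype n] [DecidableEq n] [CommRing R]

theorem det_updateRow_eq_sum_mul_adjugate (A : Matrix n n R) (k : n) (r : n → R) :
    (A.updateRow k r).det = ∑ j, r j * A.adjugate j k := by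
  rw [← cramer_transpose_apply, cramer_eq_adjugate_mulVec, ← adjugate_transpose]
  simp [mulVec, dotProduct, mul_comm]

theorem sum_det_updateRow (A B : Matrix n n R) :
    ∑ i, (A.updateRow i (B i)).det = (B * A.adjugate).trace := by
  simp [det_updateRow_eq_sum_mul_adjugate, trace, mul_apply]

theorem sum_det_updateRow_mul (A N : Matrix n n R) :
    ∑ i, (A.updateRow i ((A * N) i)).det = A.det * N.trace := by
  rw [sum_det_updateRow, Matrix.mul_assoc, trace_mul_comm, Matrix.mul_assoc, adjugate_mul,
    Matrix.mul_smul, Matrix.mul_one, trace_smul, smul_eq_mul]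

end Determinant

def alternant {n α R : Type*} (f : n → α → R) (x : n → α) : Matrix n n R :=
  of fun i j => f j (x i)

theorem alternant_update {n α R : Type*} [DecidableEq n] (f : n → α → R) (x : n → α) (k : n)
    (t : α) : alternant f (Function.update x k t) = (alternant f x).updateRow k fun j => f j t := by
  ext i j
  by_cases h : i = k
  · subst h
    simp [alternant]
  · simp [alternant, h]

section Calculus

variable {n 𝕜 : Type*} [Fintype n] [DecidableEq n] [NontriviallyNormedField 𝕜]

theorem hasDerivAt_det_updateRow (A : Matrix n n 𝕜) (k : n) {g : 𝕜 → n → 𝕜} {g' : n → 𝕜}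
    {t : 𝕜} (hg : ∀ j, HasDerivAt (fun s => g s j) (g' j) t) :
    HasDerivAt (fun s => (A.updateRow k (g s)).det) (A.updateRow k g').det t := by
  simp_rw [det_updateRow_eq_sum_mul_adjugate]
  exact HasDerivAt.fun_sum fun j _ => (hg j).mul_const _

theorem iteratedDeriv_two_det_alternant_update {f f' f'' : n → 𝕜 → 𝕜}
    (hf : ∀ j t, HasDerivAt (f j) (f' j t) t) (hf' : ∀ j t, HasDerivAt (f' j) (f'' j t) t)
    (x : n → 𝕜) (k : n) (t : 𝕜) :
    iteratedDeriv 2 (fun s => (alternant f (Function.update x k s)).det) t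
      = ((alternant f x).updateRow k fun j => f'' j t).det := by
  have hderiv : deriv (fun s => (alternant f (Function.update x k s)).det)
      = fun s => ((alternant f x).updateRow k fun j => f' j s).det := by
    funext s
    simp_rw [alternant_update]
    exact (hasDerivAt_det_updateRow _ _ fun j => hf j s).deriv
  rw [iteratedDeriv_succ, iteratedDeriv_one, hderiv]
  exact (hasDerivAt_det_updateRow _ _ fun j => hf' j t).deriv

theorem sum_iteratedDeriv_two_det_alternant_update {f f' f'' : n → 𝕜 → 𝕜}
    (hf : ∀ j t, HasDerivAt (f j) (f' j t) t) (hf' : ∀ j t, HasDerivAt (f' j) (f'' j t) t)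
    (N : Matrix n n 𝕜) (hN : ∀ j t, f'' j t = ∑ i, N i j * f i t) (x : n → 𝕜) :
    ∑ k, iteratedDeriv 2 (fun s => (alternant f (Function.update x k s)).det) (x k)
      = (alternant f x).det * N.trace := by
  rw [← sum_det_updateRow_mul]
  refine sum_congr rfl fun k _ => ?_
  rw [iteratedDeriv_two_det_alternant_update hf hf']
  congr
  ext j
  simp only [hN, mul_apply, alternant, of_apply, mul_comm]

end Calculus

def monomialSecondDeriv (n : ℕ) (R : Type*) [Semiring R] : Matrix (Fin n) (Fin n) R :=
  of fun i j => if (i : ℕ) + 2 = j then ((j * (j - 1) : ℕ) : R) else 0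

theorem trace_monomialSecondDeriv (n : ℕ) (R : Type*) [Semiring R] :
    (monomialSecondDeriv n R).trace = 0 := by
  simp [monomialSecondDeriv, trace]

theorem sum_monomialSecondDeriv_mul_pow {n : ℕ} {R : Type*} [Semiring R] (t : R) (j : Fin n) :
    ∑ i : Fin n, monomialSecondDeriv n R i j * t ^ (i : ℕ)
      = ((j * (j - 1) : ℕ) : R) * t ^ ((j : ℕ) - 2) := by
  rcases lt_or_ge (j : ℕ) 2 with hj | hj
  · have hj0 : (j : ℕ) * (j - 1) = 0 := by interval_cases (j : ℕ) <;> rfl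
    rw [hj0, Nat.cast_zero, zero_mul]
    exact sum_eq_zero fun i _ => by simp [monomialSecondDeriv, show (i : ℕ) + 2 ≠ j by omega]
  · rw [sum_eq_single ⟨j - 2, by omega⟩]
    · simp [monomialSecondDeriv, show (j : ℕ) - 2 + 2 = j by omega]
    · intro i _ hi
      have hij : (i : ℕ) + 2 ≠ j := fun h => hi (Fin.ext (by simp only; omega))
      simp [monomialSecondDeriv, hij]
    · simp

theorem sum_iteratedDeriv_two_det_vandermonde_update {n : ℕ} {𝕜 : Type*}
    [NontriviallyNormedField 𝕜] (x : Fin n → 𝕜) :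
    ∑ k, iteratedDeriv 2 (fun s => (vandermonde (Function.update x k s)).det) (x k) = 0 := by
  have hf' (j : Fin n) (t : 𝕜) : HasDerivAt (fun s => (j : 𝕜) * s ^ ((j : ℕ) - 1))
      (((j * (j - 1) : ℕ) : 𝕜) * t ^ ((j : ℕ) - 2)) t :=
    ((hasDerivAt_pow _ t).const_mul _).congr_deriv (by rw [Nat.cast_mul, Nat.sub_sub, mul_assoc])
  have hsum := sum_iteratedDeriv_two_det_alternant_update
    (fun (j : Fin n) t => hasDerivAt_pow (j : ℕ) t) hf' (monomialSecondDeriv n 𝕜)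
    (fun j t => (sum_monomialSecondDeriv_mul_pow t j).symm) x
  rwa [trace_monomialSecondDeriv, mul_zero] at hsum

end Matrix

theorem vandermondeFn_eq_det (n : ℕ) (x : Fin n → ℝ) :
    vandermondeFn n x = (Matrix.vandermonde x).det := by
  rw [Matrix.det_vandermonde, vandermondeFn, prod_filter, Fintype.prod_prod_type]
  refine prod_congr rfl fun i _ => ?_
  rw [← prod_filter]
  congr 1
  ext j
  simp

/-- `h` is harmonic on `ℝ^n`: the sum of its second partial derivatives vanishes
identically. -/
theorem vandermonde_harmonic (n : ℕ) (x : Fin n → ℝ) :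
    ∑ k : Fin n,
      iteratedDeriv 2 (fun t : ℝ => vandermondeFn n (Function.update x k t)) (x k) = 0 := by
  simp_rw [vandermondeFn_eq_det]
  exact Matrix.sum_iteratedDeriv_two_det_vandermonde_update x
end

section
/- For continuous paths f₁, …, f_n on ℝ₊ vanishing at 0, the iterated min-plus product satisfies (f₁ ⊗ f₂ ⊗ ⋯ ⊗ f_n)(t) = inf_{0 ≤ s₁ ≤ ⋯ ≤ s_{n−1} ≤ t} [f₁(s₁) + (f₂(s₂) − f₂(s₁)) + ⋯ + (f_n(t) − f_n(s_{n−1}))]. -/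
/-!
Splitting a chain `0 = s₀ ≤ ⋯ ≤ s_{n+1} = t` at its last interior point `u = s_n` writes the set
of chain sums of `f₁, …, f_{n+1}` up to `t` as the union over `u ∈ [0, t]` of the chain sums of
`f₁, …, f_n` up to `u`, translated by `f_{n+1}(t) - f_{n+1}(u)`. An infimum of a union is the
infimum of the infima, so by induction the infimum of the chain sums up to `u` is
`(f₁ ⊗ ⋯ ⊗ f_n)(u)`, and the outer infimum over `u` is exactly one more min-plus product.
Continuity makes all these sets bounded below, so that `sInf` on `ℝ` is the true infimum.
-/

/-- Min-plus convolution: `(f ⊗ g)(t) = inf_{0 ≤ s ≤ t} [f(s) + g(t) - g(s)]`. -/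
noncomputable def minPlus (f g : ℝ → ℝ) (t : ℝ) : ℝ :=
  sInf ((fun s => f s + g t - g s) '' Set.Icc 0 t)

/-- The left-to-right iterated min-plus product `f₁ ⊗ f₂ ⊗ ⋯ ⊗ f_n`. -/
noncomputable def minPlusChain {n : ℕ} (f : Fin (n + 1) → ℝ → ℝ) : ℝ → ℝ :=
  (List.ofFn fun i : Fin n => f i.succ).foldl minPlus (f 0)

open Set

theorem lowerBounds_iUnion_eq_of_isGLB {α ι : Type*} [Preorder α] {s : ι → Set α} {u : ι → α}
    (hs : ∀ i, IsGLB (s i) (u i)) : lowerBounds (⋃ i, s i) = lowerBounds (range u) := by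
  simp_rw [range_eq_iUnion, lowerBounds_iUnion, lowerBounds_singleton, (hs _).lowerBounds_eq]

theorem minPlusChain_succ {n : ℕ} (f : Fin (n + 2) → ℝ → ℝ) :
    minPlusChain f =
      minPlus (minPlusChain fun i : Fin (n + 1) => f i.castSucc) (f (Fin.last (n + 1))) := by
  rw [minPlusChain, List.ofFn_succ', List.concat_eq_append, List.foldl_concat]
  simp only [Fin.succ_castSucc, Fin.succ_last]
  rfl

def chainSums (n : ℕ) (f : Fin (n + 1) → ℝ → ℝ) (t : ℝ) : Set ℝ :=
  { v : ℝ | ∃ s : Fin (n + 2) → ℝ, Monotone s ∧ s 0 = 0 ∧ s (Fin.last (n + 1)) = t ∧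
      v = ∑ i : Fin (n + 1), (f i (s i.succ) - f i (s i.castSucc)) }

section chainSums

variable {n : ℕ} {f : Fin (n + 1) → ℝ → ℝ} {t : ℝ}

theorem mem_Icc_of_monotone {s : Fin (n + 2) → ℝ} (hs : Monotone s) (hs0 : s 0 = 0)
    (hst : s (Fin.last (n + 1)) = t) (i : Fin (n + 2)) : s i ∈ Icc 0 t :=
  ⟨hs0 ▸ hs (Fin.zero_le i), hst ▸ hs (Fin.le_last i)⟩

theorem chainSums_nonempty (ht : 0 ≤ t) : (chainSums n f t).Nonempty := by
  refine ⟨_, fun i => if i = 0 then 0 else t, fun i j hij => ?_, if_pos rfl,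
    if_neg (Fin.last_pos.ne'), rfl⟩
  by_cases hi : i = 0
  · simp only [hi, if_true]
    split_ifs <;> simp [ht]
  · simp [hi, Fin.pos_iff_ne_zero.mp ((Fin.pos_iff_ne_zero.mpr hi).trans_le hij)]

theorem chainSums_zero {f : Fin 1 → ℝ → ℝ} (hf0 : f 0 0 = 0) (ht : 0 ≤ t) :
    chainSums 0 f t = {f 0 t} := by
  refine (chainSums_nonempty ht).subset_singleton_iff.mp ?_
  rintro _ ⟨s, -, hs0, hst, rfl⟩
  simp [hs0, hf0, ← hst]

theorem bddBelow_chainSums (hf : ∀ i, Continuous (f i)) (t : ℝ) : BddBelow (chainSums n f t) := by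
  have hK : IsCompact (Icc (0 : ℝ) t ×ˢ Icc 0 t) := isCompact_Icc.prod isCompact_Icc
  choose b hb using fun i => hK.bddBelow_image (f := fun p : ℝ × ℝ => f i p.1 - f i p.2)
    (by have := hf i; fun_prop : Continuous fun p : ℝ × ℝ => f i p.1 - f i p.2).continuousOn
  refine ⟨∑ i, b i, ?_⟩
  rintro _ ⟨s, hs, hs0, hst, rfl⟩
  exact Finset.sum_le_sum fun i _ => hb i
    ⟨(s i.succ, s i.castSucc), ⟨mem_Icc_of_monotone hs hs0 hst _, mem_Icc_of_monotone hs hs0 hst _⟩,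
      rfl⟩

end chainSums

theorem chainSums_succ {n : ℕ} (f : Fin (n + 2) → ℝ → ℝ) (t : ℝ) :
    chainSums (n + 1) f t = ⋃ u : Icc 0 t,
      (· + (f (Fin.last (n + 1)) t - f (Fin.last (n + 1)) u)) ''
        chainSums n (fun i => f i.castSucc) u := by
  ext v
  simp only [mem_iUnion, mem_image, Subtype.exists, exists_prop]
  constructor
  · rintro ⟨s, hs, hs0, hst, rfl⟩
    refine ⟨s (Fin.last (n + 1)).castSucc, mem_Icc_of_monotone hs hs0 hst _, _,
      ⟨Fin.init s, fun i j hij => hs (Fin.castSucc_le_castSucc_iff.mpr hij), hs0, rfl, rfl⟩, ?_⟩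
    rw [Fin.sum_univ_castSucc (n := n + 1)]
    simp [Fin.init, hst]
  · rintro ⟨u, hu, _, ⟨s, hs, hs0, hsu, rfl⟩, rfl⟩
    refine ⟨Fin.snoc s t, Fin.monotone_iff_le_succ.mpr fun i => ?_, ?_, by simp, ?_⟩
    · rcases Fin.eq_castSucc_or_eq_last i with ⟨i, rfl⟩ | rfl
      · simp only [Fin.snoc_castSucc, Fin.succ_castSucc]
        exact Fin.monotone_iff_le_succ.mp hs i
      · simpa [hsu] using hu.2
    · simpa using hs0
    · rw [Fin.sum_univ_castSucc (n := n + 1)]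
      simp only [Fin.succ_castSucc, Fin.snoc_castSucc, Fin.succ_last, Fin.snoc_last, hsu]

theorem isGLB_chainSums_minPlusChain {n : ℕ} {f : Fin (n + 1) → ℝ → ℝ}
    (hf : ∀ i, Continuous (f i)) (hf0 : f 0 0 = 0) {t : ℝ} (ht : 0 ≤ t) :
    IsGLB (chainSums n f t) (minPlusChain f t) := by
  induction n generalizing t with
  | zero =>
    rw [chainSums_zero hf0 ht]
    exact isGLB_singleton
  | succ n ih =>
    set g : Fin (n + 1) → ℝ → ℝ := fun i => f i.castSucc
    set h := f (Fin.last (n + 1))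
    have hlb : lowerBounds (chainSums (n + 1) f t) =
        lowerBounds (range fun u : Icc 0 t => minPlusChain g u + (h t - h u)) := by
      rw [chainSums_succ]
      exact lowerBounds_iUnion_eq_of_isGLB fun u =>
        (OrderIso.addRight _).isGLB_image'.mpr (ih (f := g) (fun i => hf _) hf0 u.2.1)
    have hbdd : BddBelow (range fun u : Icc 0 t => minPlusChain g u + (h t - h u)) := by
      rw [BddBelow, ← hlb]
      exact bddBelow_chainSums hf t
    have hmin : minPlusChain f t =
        sInf (range fun u : Icc 0 t => minPlusChain g u + (h t - h u)) := by
      simp_rw [minPlusChain_succ f, minPlus, image_eq_range, add_sub_assoc]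
      rfl
    rw [isGLB_congr hlb, hmin]
    exact isGLB_csInf ⟨_, ⟨t, ht, le_rfl⟩, rfl⟩ hbdd

/-- The iterated min-plus product is an infimum over increasing chains of times:
`(f₁ ⊗ ⋯ ⊗ f_n)(t) = inf_{0 ≤ s₁ ≤ ⋯ ≤ s_{n-1} ≤ t}
  [f₁(s₁) + (f₂(s₂) - f₂(s₁)) + ⋯ + (f_n(t) - f_n(s_{n-1}))]`,
where the chain is encoded as a monotone `s : Fin (n+1) → ℝ` with `s 0 = 0`, `s n = t`. -/
theorem minPlusChain_eq_inf (n : ℕ) (f : Fin (n + 1) → ℝ → ℝ)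
    (hf : ∀ i, Continuous (f i)) (hf0 : ∀ i, f i 0 = 0) :
    ∀ t : ℝ, 0 ≤ t →
      minPlusChain f t =
        sInf { v : ℝ | ∃ s : Fin (n + 2) → ℝ, Monotone s ∧ s 0 = 0 ∧ s (Fin.last (n + 1)) = t ∧
          v = ∑ i : Fin (n + 1), (f i (s i.succ) - f i (s i.castSucc)) } := fun _ ht =>
  ((isGLB_chainSums_minPlusChain hf (hf0 0) ht).csInf_eq (chainSums_nonempty ht)).symm
end
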